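/- arXiv:2205.13059 — 3 statements merged into one kernel-verified Lean document; each statement's English description precedes it below -/
import Mathlib

section
/- Let Γ be a locally compact Hausdorff topological space, let φ be a flow on Γ, and let S ⊆ Γ be an isolated invariant set of φ. Then there exists an index pair (M,N) for S. -/
open Set

/-- A (continuous) flow on a topological space `Γ`. -/
def IsFlow {Γ : Type*} [TopologicalSpace Γ] (φ : Γ × ℝ → Γ) : Prop :=
  Continuous φ ∧ (∀ x, φ (x, 0) = x) ∧ ∀ (x : Γ) (s t : ℝ), φ (φ (x, s), t) = φ (x, s + t)

/-- The maximal invariant subset of `U`. -/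
def maxInv {Γ : Type*} (φ : Γ × ℝ → Γ) (U : Set Γ) : Set Γ :=
  {u | u ∈ U ∧ ∀ t : ℝ, φ (u, t) ∈ U}

/-- `U` is a compact (isolating) neighbourhood of `S` with `Inv U = S`. -/
def IsIsolatingNbhd {Γ : Type*} [TopologicalSpace Γ] (φ : Γ × ℝ → Γ) (U S : Set Γ) : Prop :=
  IsCompact U ∧ U ∈ nhdsSet S ∧ maxInv φ U = S

/-- `S` is an isolated invariant set of the flow `φ`. -/
def IsIsolatedInvariantSet {Γ : Type*} [TopologicalSpace Γ] (φ : Γ × ℝ → Γ) (S : Set Γ) : Prop :=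
  IsCompact S ∧ ∃ U : Set Γ, IsIsolatingNbhd φ U S

/-- `(M, N)` is an index pair for the isolated invariant set `S`. -/
def IsIndexPair {Γ : Type*} [TopologicalSpace Γ] (φ : Γ × ℝ → Γ) (S M N : Set Γ) : Prop :=
  IsCompact M ∧ IsCompact N ∧ N ⊆ M ∧
  IsIsolatingNbhd φ (closure (M \ N)) S ∧
  (∀ x ∈ N, ∀ t : ℝ, 0 ≤ t →
    (∀ s ∈ Icc (0 : ℝ) t, φ (x, s) ∈ M) → ∀ s ∈ Icc (0 : ℝ) t, φ (x, s) ∈ N) ∧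
  (∀ x ∈ M, ∀ t : ℝ, 0 ≤ t → φ (x, t) ∉ M → ∃ s ∈ Icc (0 : ℝ) t, φ (x, s) ∈ N)

set_option linter.unusedSectionVars false

namespace ConleyAux

variable {Γ : Type*} [TopologicalSpace Γ]

/-- The forward extension of `C` inside `U`: all points reachable from `C` by a forward
orbit segment staying in `U`. -/
def fwdA (φ : Γ × ℝ → Γ) (U C : Set Γ) : Set Γ :=
  {x | ∃ y ∈ C, ∃ t : ℝ, 0 ≤ t ∧ (∀ s ∈ Icc (0 : ℝ) t, φ (y, s) ∈ U) ∧ φ (y, t) = x}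

lemma fwdA_mono (φ : Γ × ℝ → Γ) (U : Set Γ) {C C' : Set Γ} (h : C ⊆ C') :
    fwdA φ U C ⊆ fwdA φ U C' := by
  rintro x ⟨y, hy, t, ht, hseg, rfl⟩
  exact ⟨y, h hy, t, ht, hseg, rfl⟩

lemma subset_fwdA (φ : Γ × ℝ → Γ) {U C : Set Γ} (h0 : ∀ x, φ (x, 0) = x) (hCU : C ⊆ U) :
    C ⊆ fwdA φ U C := by
  intro y hy
  refine ⟨y, hy, 0, le_refl _, fun s hs => ?_, h0 y⟩
  have hs0 : s = 0 := le_antisymm hs.2 hs.1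
  rw [hs0, h0]
  exact hCU hy

lemma fwdA_subset (φ : Γ × ℝ → Γ) (U C : Set Γ) : fwdA φ U C ⊆ U := by
  rintro x ⟨y, _, t, ht, hseg, rfl⟩
  exact hseg t ⟨ht, le_refl _⟩

/-- Positive invariance of `fwdA φ U C` relative to `U`. -/
lemma fwdA_posinv {φ : Γ × ℝ → Γ} {U C : Set Γ}
    (hadd : ∀ (x : Γ) (s t : ℝ), φ (φ (x, s), t) = φ (x, s + t))
    {x : Γ} (hx : x ∈ fwdA φ U C) {r : ℝ}
    (hseg : ∀ s ∈ Icc (0 : ℝ) r, φ (x, s) ∈ U) :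
    ∀ s ∈ Icc (0 : ℝ) r, φ (x, s) ∈ fwdA φ U C := by
  obtain ⟨y, hy, t, ht, htseg, rfl⟩ := hx
  intro s hs
  refine ⟨y, hy, t + s, by linarith [hs.1], fun σ hσ => ?_, by rw [hadd]⟩
  rcases le_or_gt σ t with h | h
  · exact htseg σ ⟨hσ.1, h⟩
  · have heq : φ (φ (y, t), σ - t) = φ (y, σ) := by rw [hadd]; ring_nf
    rw [← heq]
    exact hseg (σ - t) ⟨by linarith, by linarith [hσ.2, hs.2]⟩

/-- The set of pairs `(y, t)` with `t ≥ 0` whose orbit segment `[0, t]` stays in `U`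
is closed. -/
lemma isClosed_seg {φ : Γ × ℝ → Γ} (hc : Continuous φ) {U : Set Γ} (hU : IsClosed U) :
    IsClosed {p : Γ × ℝ | 0 ≤ p.2 ∧ ∀ s ∈ Icc (0 : ℝ) p.2, φ (p.1, s) ∈ U} := by
  have heq : {p : Γ × ℝ | 0 ≤ p.2 ∧ ∀ s ∈ Icc (0 : ℝ) p.2, φ (p.1, s) ∈ U}
      = {p : Γ × ℝ | 0 ≤ p.2} ∩ ⋂ s ∈ Ici (0 : ℝ),
          (fun p : Γ × ℝ => φ (p.1, min p.2 s)) ⁻¹' U := by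
    ext p
    simp only [mem_setOf_eq, mem_inter_iff, mem_iInter, mem_Ici, mem_preimage]
    constructor
    · rintro ⟨h0, h⟩
      exact ⟨h0, fun s hs => h _ ⟨le_min h0 hs, min_le_left _ _⟩⟩
    · rintro ⟨h0, h⟩
      refine ⟨h0, fun s hs => ?_⟩
      have := h s hs.1
      rwa [min_eq_right hs.2] at this
  rw [heq]
  refine (isClosed_le continuous_const continuous_snd).inter (isClosed_biInter fun s _ => ?_)
  exact hU.preimage (hc.comp (continuous_fst.prodMk (continuous_snd.min continuous_const)))

/-- Sets of the form `{x | φ (x, s) ∈ O for all s in a compact interval}` are open when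
`O` is open. -/
lemma isOpen_tube {φ : Γ × ℝ → Γ} (hc : Continuous φ) {O : Set Γ} (hO : IsOpen O) (a b : ℝ) :
    IsOpen {x : Γ | ∀ s ∈ Icc a b, φ (x, s) ∈ O} := by
  rw [isOpen_iff_mem_nhds]
  intro x hx
  have hsub : ({x} : Set Γ) ×ˢ Icc a b ⊆ φ ⁻¹' O := by
    rintro ⟨x', s⟩ ⟨hx', hs⟩
    rw [mem_singleton_iff] at hx'
    subst hx'
    exact hx s hs
  obtain ⟨u, v, hu, _, hxu, hIv, huv⟩ :=
    generalized_tube_lemma isCompact_singleton isCompact_Icc (hO.preimage hc) hsub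
  exact mem_nhds_iff.mpr
    ⟨u, fun y hy s hs => huv (mk_mem_prod hy (hIv hs)), hu, hxu rfl⟩

/-- A decreasing family of compact closed sets with empty intersection has an empty member. -/
lemma exists_empty_of_iInter_empty (K : ℕ → Set Γ)
    (hmono : ∀ {m n : ℕ}, m ≤ n → K n ⊆ K m) (hcp : ∀ n, IsCompact (K n))
    (hcl : ∀ n, IsClosed (K n)) (hempty : (⋂ n, K n) = ∅) : ∃ n, K n = ∅ := by
  by_contra h
  push_neg at h
  have hne := IsCompact.nonempty_iInter_of_directed_nonempty_isCompact_isClosed K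
    (fun m n => ⟨max m n, hmono (le_max_left _ _), hmono (le_max_right _ _)⟩)
    (fun n => h n) hcp hcl
  rw [hempty] at hne
  exact hne.ne_empty rfl

end ConleyAux

open ConleyAux

/-- **Existence of index pairs** (Conley): every isolated invariant set of a flow on a
locally compact Hausdorff space admits an index pair. -/
theorem exists_index_pair {Γ : Type*} [TopologicalSpace Γ] [LocallyCompactSpace Γ] [T2Space Γ]
    (φ : Γ × ℝ → Γ) (hφ : IsFlow φ) (S : Set Γ) (hS : IsIsolatedInvariantSet φ S) :
    ∃ M N : Set Γ, IsIndexPair φ S M N := by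
  obtain ⟨hφc, hφ0, hφadd⟩ := hφ
  obtain ⟨hScomp, U, hUcomp, hUnhd, hUinv⟩ := hS
  have hUcl : IsClosed U := hUcomp.isClosed
  have hSintU : S ⊆ interior U := subset_interior_iff_mem_nhdsSet.mpr hUnhd
  have hSU : S ⊆ U := hSintU.trans interior_subset
  -- invariance of S
  have hSinv : ∀ x ∈ S, ∀ t : ℝ, φ (x, t) ∈ S := by
    intro x hx t
    rw [← hUinv] at hx ⊢
    exact ⟨hx.2 t, fun s => by rw [hφadd]; exact hx.2 _⟩
  have hct : ∀ t : ℝ, Continuous fun x : Γ => φ (x, t) := fun t =>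
    hφc.comp (continuous_id.prodMk continuous_const)
  -- families of closed sets defined by orbit-segment conditions
  have hclosed_fam : ∀ I : Set ℝ, IsClosed {x : Γ | ∀ s ∈ I, φ (x, s) ∈ U} := by
    intro I
    have : {x : Γ | ∀ s ∈ I, φ (x, s) ∈ U} = ⋂ s ∈ I, (fun x => φ (x, s)) ⁻¹' U := by
      ext x; simp
    rw [this]
    exact isClosed_biInter fun s _ => hUcl.preimage (hct s)
  -- forward and backward invariant parts of U
  set Ip : Set Γ := {x : Γ | ∀ s ∈ Ici (0 : ℝ), φ (x, s) ∈ U} with hIp_def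
  set Im : Set Γ := {x : Γ | ∀ s ∈ Iic (0 : ℝ), φ (x, s) ∈ U} with hIm_def
  have hIp_cl : IsClosed Ip := hclosed_fam _
  have hIm_cl : IsClosed Im := hclosed_fam _
  have hIp_sub : Ip ⊆ U := fun x hx => by
    have := hx 0 (mem_Ici.mpr le_rfl); rwa [hφ0] at this
  have hIm_sub : Im ⊆ U := fun x hx => by
    have := hx 0 (mem_Iic.mpr le_rfl); rwa [hφ0] at this
  have hIpIm : ∀ x, x ∈ Ip → x ∈ Im → x ∈ S := by
    intro x hp hm
    rw [← hUinv]
    refine ⟨hIp_sub hp, fun t => ?_⟩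
    rcases le_or_gt 0 t with h | h
    · exact hp t h
    · exact hm t h.le
  have hSIp : S ⊆ Ip := fun x hx s hs => hSU (hSinv x hx s)
  have hSIm : S ⊆ Im := fun x hx s _ => hSU (hSinv x hx s)
  -- the basic compact families
  set Gn : ℕ → Set Γ := fun n => {x : Γ | ∀ s ∈ Icc (-(n : ℝ)) 0, φ (x, s) ∈ U} with hGn_def
  set Un : ℕ → Set Γ := fun n => {x : Γ | ∀ s ∈ Icc (-(n : ℝ)) (n : ℝ), φ (x, s) ∈ U}
    with hUn_def
  have hGn_cl : ∀ n, IsClosed (Gn n) := fun n => hclosed_fam _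
  have hUn_cl : ∀ n, IsClosed (Un n) := fun n => hclosed_fam _
  have hGn_sub : ∀ n, Gn n ⊆ U := by
    intro n x hx
    have := hx 0 ⟨neg_nonpos.mpr (Nat.cast_nonneg n), le_refl _⟩
    rwa [hφ0] at this
  have hUn_subU : ∀ n, Un n ⊆ U := by
    intro n x hx
    have := hx 0 ⟨neg_nonpos.mpr (Nat.cast_nonneg n), Nat.cast_nonneg n⟩
    rwa [hφ0] at this
  have hGn_mono : ∀ {m n : ℕ}, m ≤ n → Gn n ⊆ Gn m := by
    intro m n hmn x hx s hs
    exact hx s ⟨le_trans (by exact_mod_cast neg_le_neg (Nat.cast_le.mpr hmn)) hs.1, hs.2⟩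
  -- the exit set
  set ExitC : Set Γ := {w : Γ | ∀ s ∈ Icc (0 : ℝ) 1, φ (w, s) ∈ interior U} with hExitC_def
  have hExitC_open : IsOpen ExitC := isOpen_tube hφc isOpen_interior 0 1
  set Exit : Set Γ := U ∩ ExitCᶜ with hExit_def
  have hExit_cl : IsClosed Exit := hUcl.inter hExitC_open.isClosed_compl
  have hExit_sub : Exit ⊆ U := inter_subset_left
  have hS_ExitC : ∀ x ∈ S, x ∈ ExitC := fun x hx s _ => hSintU (hSinv x hx s)
  -- squeeze: find T with Gn T ∩ Ip ∩ Exit = ∅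
  have hsq : ∃ T : ℕ, Gn T ∩ Ip ∩ Exit = ∅ := by
    apply exists_empty_of_iInter_empty (fun n => Gn n ∩ Ip ∩ Exit)
    · intro m n hmn x hx
      exact ⟨⟨hGn_mono hmn hx.1.1, hx.1.2⟩, hx.2⟩
    · intro n
      exact hUcomp.of_isClosed_subset (((hGn_cl n).inter hIp_cl).inter hExit_cl)
        (fun x hx => hGn_sub n hx.1.1)
    · intro n
      exact ((hGn_cl n).inter hIp_cl).inter hExit_cl
    · ext x
      simp only [mem_iInter, mem_inter_iff, mem_empty_iff_false, iff_false]
      intro hall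
      have hIm' : x ∈ Im := by
        intro t ht
        obtain ⟨n, hn⟩ := exists_nat_ge (-t)
        exact (hall n).1.1 t ⟨by linarith, ht⟩
      have hxS : x ∈ S := hIpIm x (hall 0).1.2 hIm'
      exact (hall 0).2.2 (hS_ExitC x hxS)
  obtain ⟨T, hT⟩ := hsq
  -- the "block" B
  set B : Set Γ := Un T with hB_def
  have hB_sub : B ⊆ U := hUn_subU T
  have hB_comp : IsCompact B := hUcomp.of_isClosed_subset (hUn_cl T) hB_sub
  -- S ⊆ interior B
  have hSB : S ⊆ interior B := by
    have hWopen : IsOpen {x : Γ | ∀ s ∈ Icc (-(T : ℝ)) (T : ℝ), φ (x, s) ∈ interior U} :=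
      isOpen_tube hφc isOpen_interior _ _
    have hWB : {x : Γ | ∀ s ∈ Icc (-(T : ℝ)) (T : ℝ), φ (x, s) ∈ interior U} ⊆ B :=
      fun x hx s hs => interior_subset (hx s hs)
    have hSW : S ⊆ {x : Γ | ∀ s ∈ Icc (-(T : ℝ)) (T : ℝ), φ (x, s) ∈ interior U} :=
      fun x hx s _ => hSintU (hSinv x hx s)
    exact fun x hx => interior_maximal hWB hWopen (hSW hx)
  -- the set V
  set V : Set Γ := (Gn T ∩ Exit) ∪ (Im \ interior B) with hV_def
  have hV_sub : V ⊆ U := by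
    rintro x (hx | hx)
    · exact hExit_sub hx.2
    · exact hIm_sub hx.1
  have hV_cl : IsClosed V :=
    ((hGn_cl T).inter hExit_cl).union (hIm_cl.inter isOpen_interior.isClosed_compl)
  have hV_comp : IsCompact V := hUcomp.of_isClosed_subset hV_cl hV_sub
  have hV_Ip : ∀ x ∈ V, x ∉ Ip := by
    rintro x (hx | hx) hp
    · have : x ∈ (∅ : Set Γ) := hT ▸ ⟨⟨hx.1, hp⟩, hx.2⟩
      exact this
    · exact hx.2 (hSB (hIpIm x hp hx.1))
  have hIm_BV : Im ⊆ B ∪ V := by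
    intro x hx
    by_cases hxB : x ∈ interior B
    · exact Or.inl (interior_subset hxB)
    · exact Or.inr (Or.inr ⟨hx, hxB⟩)
  have hBV_sub : B ∪ V ⊆ U := union_subset hB_sub hV_sub
  have hBV_comp : IsCompact (B ∪ V) := hB_comp.union hV_comp
  -- the index pair
  set M : Set Γ := fwdA φ U (B ∪ V) with hM_def
  set N : Set Γ := fwdA φ U V with hN_def
  have hMU : M ⊆ U := fwdA_subset φ U _
  have hNU : N ⊆ U := fwdA_subset φ U _
  have hNM : N ⊆ M := fwdA_mono φ U subset_union_right
  -- bounded-time pieces of fwdA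
  set An : Set Γ → ℝ → Set Γ := fun C n =>
    φ '' ((C ×ˢ Icc (0 : ℝ) n) ∩ {p : Γ × ℝ | 0 ≤ p.2 ∧ ∀ s ∈ Icc (0 : ℝ) p.2, φ (p.1, s) ∈ U})
    with hAn_def
  have hAn_comp : ∀ (C : Set Γ), IsCompact C → ∀ n : ℝ, IsCompact (An C n) := by
    intro C hC n
    exact (((hC.prod isCompact_Icc).inter_right (isClosed_seg hφc hUcl)).image hφc)
  have hAn_sub : ∀ (C : Set Γ) (n : ℝ), An C n ⊆ fwdA φ U C := by
    rintro C n x ⟨⟨y, t⟩, ⟨⟨hyC, _⟩, h0, hseg⟩, rfl⟩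
    exact ⟨y, hyC, t, h0, hseg, rfl⟩
  -- N is compact: exit times from V are bounded
  have hNV_bdd : ∃ n : ℕ, V ∩ {y : Γ | ∀ s ∈ Icc (0 : ℝ) (n : ℝ), φ (y, s) ∈ U} = ∅ := by
    apply exists_empty_of_iInter_empty
      (fun n => V ∩ {y : Γ | ∀ s ∈ Icc (0 : ℝ) (n : ℝ), φ (y, s) ∈ U})
    · intro m n hmn x hx
      exact ⟨hx.1, fun s hs => hx.2 s ⟨hs.1, hs.2.trans (Nat.cast_le.mpr hmn)⟩⟩
    · intro n
      exact hUcomp.of_isClosed_subset (hV_cl.inter (hclosed_fam _)) fun x hx => hV_sub hx.1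
    · intro n
      exact hV_cl.inter (hclosed_fam _)
    · ext x
      simp only [mem_iInter, mem_inter_iff, mem_setOf_eq, mem_empty_iff_false, iff_false]
      intro hall
      refine hV_Ip x (hall 0).1 fun s hs => ?_
      obtain ⟨n, hn⟩ := exists_nat_ge s
      exact (hall n).2 s ⟨hs, hn⟩
  obtain ⟨nV, hnV⟩ := hNV_bdd
  have hN_eq : N = An V (nV : ℝ) := by
    apply subset_antisymm
    · rintro x ⟨y, hy, t, ht, hseg, rfl⟩
      have htle : t ≤ (nV : ℝ) := by
        by_contra hlt
        push_neg at hlt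
        have : y ∈ V ∩ {y : Γ | ∀ s ∈ Icc (0 : ℝ) (nV : ℝ), φ (y, s) ∈ U} :=
          ⟨hy, fun s hs => hseg s ⟨hs.1, hs.2.trans hlt.le⟩⟩
        rw [hnV] at this
        exact this
      exact ⟨(y, t), ⟨⟨hy, ht, htle⟩, ht, hseg⟩, rfl⟩
    · exact hAn_sub V _
  have hN_comp : IsCompact N := hN_eq ▸ hAn_comp V hV_comp _
  have hN_cl : IsClosed N := hN_comp.isClosed
  -- M is compact
  have hM_eq : M = ⋂ n : ℕ, (An (B ∪ V) (n : ℝ) ∪ Gn n) := by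
    apply subset_antisymm
    · intro x hx
      rw [mem_iInter]
      intro n
      obtain ⟨y, hy, t, ht, hseg, rfl⟩ := hx
      rcases le_or_gt t (n : ℝ) with h | h
      · exact Or.inl ⟨(y, t), ⟨⟨hy, ht, h⟩, ht, hseg⟩, rfl⟩
      · refine Or.inr fun s hs => ?_
        have heq : φ (φ (y, t), s) = φ (y, t + s) := hφadd y t s
        rw [heq]
        exact hseg (t + s) ⟨by linarith [hs.1], by linarith [hs.2]⟩
    · intro x hx
      rw [mem_iInter] at hx
      by_cases hex : ∃ n : ℕ, x ∈ An (B ∪ V) (n : ℝ)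
      · obtain ⟨n, hn⟩ := hex
        exact hAn_sub _ _ hn
      · push_neg at hex
        have hxG : ∀ n : ℕ, x ∈ Gn n := fun n => (hx n).resolve_left (hex n)
        have hxIm : x ∈ Im := by
          intro t ht
          obtain ⟨n, hn⟩ := exists_nat_ge (-t)
          exact hxG n t ⟨by linarith, ht⟩
        exact subset_fwdA φ hφ0 hBV_sub (hIm_BV hxIm)
  have hM_cl : IsClosed M := by
    rw [hM_eq]
    exact isClosed_iInter fun n =>
      ((hAn_comp _ hBV_comp _).isClosed).union (hGn_cl n)
  have hM_comp : IsCompact M := hUcomp.of_isClosed_subset hM_cl hMU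
  -- S is disjoint from N
  have hSN : ∀ x ∈ S, x ∉ N := by
    rintro x hx ⟨y, hy, t, ht, hseg, heq⟩
    have hyS : y ∈ S := by
      have h1 := hSinv x hx (-t)
      rw [← heq, hφadd, add_neg_cancel, hφ0] at h1
      exact h1
    exact hV_Ip y hy (hSIp hyS)
  -- the good open set
  set O : Set Γ := interior B ∩ Nᶜ with hO_def
  have hO_open : IsOpen O := isOpen_interior.inter hN_cl.isOpen_compl
  have hSO : S ⊆ O := fun x hx => ⟨hSB hx, hSN x hx⟩
  have hOMN : O ⊆ M \ N := fun x hx =>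
    ⟨subset_fwdA φ hφ0 hBV_sub (Or.inl (interior_subset hx.1)), hx.2⟩
  have hclMN_M : closure (M \ N) ⊆ M := closure_minimal diff_subset hM_cl
  refine ⟨M, N, hM_comp, hN_comp, hNM, ⟨?_, ?_, ?_⟩, ?_, ?_⟩
  · -- closure (M \ N) compact
    exact hM_comp.of_isClosed_subset isClosed_closure hclMN_M
  · -- closure (M \ N) ∈ nhdsSet S
    exact Filter.mem_of_superset (hO_open.mem_nhdsSet.mpr hSO) (hOMN.trans subset_closure)
  · -- maxInv = S
    ext u
    constructor
    · rintro ⟨hu, hall⟩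
      rw [← hUinv]
      exact ⟨hMU (hclMN_M hu), fun t => hMU (hclMN_M (hall t))⟩
    · intro hu
      exact ⟨subset_closure (hOMN (hSO hu)),
        fun t => subset_closure (hOMN (hSO (hSinv u hu t)))⟩
  · -- condition (ii): relative positive invariance of N
    intro x hx t ht hseg s hs
    exact fwdA_posinv hφadd hx (fun σ hσ => hMU (hseg σ hσ)) s hs
  · -- condition (iii): exit through N
    intro x hx t ht hnot
    set SS : Set ℝ := {s : ℝ | s ∈ Icc (0 : ℝ) t ∧ ∀ σ ∈ Icc (0 : ℝ) s, φ (x, σ) ∈ U}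
      with hSS_def
    have hSS_cl : IsClosed SS := by
      have heq : SS = Icc (0 : ℝ) t ∩ ⋂ σ ∈ Ici (0 : ℝ),
          (fun s => φ (x, min s σ)) ⁻¹' U := by
        ext s
        simp only [hSS_def, mem_setOf_eq, mem_inter_iff, mem_iInter, mem_Ici, mem_preimage]
        constructor
        · rintro ⟨hIcc, h⟩
          exact ⟨hIcc, fun σ hσ => h _ ⟨le_min hIcc.1 hσ, min_le_left _ _⟩⟩
        · rintro ⟨hIcc, h⟩
          refine ⟨hIcc, fun σ hσ => ?_⟩
          have := h σ hσ.1
          rwa [min_eq_right hσ.2] at this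
      rw [heq]
      refine isClosed_Icc.inter (isClosed_biInter fun σ _ => ?_)
      exact hUcl.preimage (hφc.comp (continuous_const.prodMk (continuous_id.min
        continuous_const)))
    have h0SS : (0 : ℝ) ∈ SS := by
      refine ⟨⟨le_refl _, ht⟩, fun σ hσ => ?_⟩
      have : σ = 0 := le_antisymm hσ.2 hσ.1
      rw [this, hφ0]
      exact hMU hx
    have hbdd : BddAbove SS := ⟨t, fun s hs => hs.1.2⟩
    set s₀ : ℝ := sSup SS with hs₀_def
    have hs₀SS : s₀ ∈ SS := hSS_cl.csSup_mem ⟨0, h0SS⟩ hbdd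
    have hs₀0 : 0 ≤ s₀ := hs₀SS.1.1
    have hs₀t : s₀ ≤ t := hs₀SS.1.2
    have hzM : φ (x, s₀) ∈ M := fwdA_posinv hφadd hx hs₀SS.2 s₀ ⟨hs₀0, le_refl _⟩
    have hlt : s₀ < t := by
      rcases lt_or_eq_of_le hs₀t with h | h
      · exact h
      · exact absurd (h ▸ hzM) hnot
    -- immediate exit at φ (x, s₀)
    have hexit : ∃ δ : ℝ, 0 < δ ∧ δ ≤ 1 ∧ δ ≤ t - s₀ ∧ φ (φ (x, s₀), δ) ∉ U := by
      by_contra hcon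
      push_neg at hcon
      set ε : ℝ := min 1 (t - s₀) with hε_def
      have hε0 : 0 < ε := lt_min one_pos (by linarith)
      have hmem : s₀ + ε ∈ SS := by
        refine ⟨⟨by linarith, by linarith [min_le_right (1 : ℝ) (t - s₀)]⟩, fun σ hσ => ?_⟩
        rcases le_or_gt σ s₀ with hh | hh
        · exact hs₀SS.2 σ ⟨hσ.1, hh⟩
        · have heq : φ (x, σ) = φ (φ (x, s₀), σ - s₀) := by rw [hφadd]; ring_nf
          rw [heq]
          exact hcon (σ - s₀) (by linarith)
            (by linarith [hσ.2, min_le_left (1 : ℝ) (t - s₀)])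
            (by linarith [hσ.2, min_le_right (1 : ℝ) (t - s₀)])
      have := le_csSup hbdd hmem
      linarith
    obtain ⟨δ, hδ0, hδ1, hδt, hδU⟩ := hexit
    -- φ (x, s₀) lies in N
    obtain ⟨y, hy, τ, hτ0, hτseg, hyz⟩ := hzM
    have hzN : φ (x, s₀) ∈ N := by
      rcases hy with hyB | hyV
      · -- y ∈ B: show φ (x, s₀) ∈ V directly
        have hzU : φ (x, s₀) ∈ U := by
          rw [← hyz]
          exact hτseg τ ⟨hτ0, le_refl _⟩
        have hzV : φ (x, s₀) ∈ V := by
          refine Or.inl ⟨?_, hzU, ?_⟩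
          · -- ∈ Gn T
            intro s hs
            have heq : φ (φ (x, s₀), s) = φ (y, τ + s) := by rw [← hyz, hφadd]
            rw [heq]
            rcases le_or_gt 0 (τ + s) with hh | hh
            · exact hτseg _ ⟨hh, by linarith [hs.2]⟩
            · exact hyB _ ⟨by linarith [hs.1], by linarith [hh, (Nat.cast_nonneg T : (0:ℝ) ≤ T)]⟩
          · -- ∉ ExitC
            intro hcon
            exact hδU (interior_subset (hcon δ ⟨hδ0.le, hδ1⟩))
        exact subset_fwdA φ hφ0 hV_sub hzV
      · exact ⟨y, hyV, τ, hτ0, hτseg, hyz⟩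
    exact ⟨s₀, ⟨hs₀0, hs₀t⟩, hzN⟩
end

section
/- Let Γ be a locally compact Hausdorff topological space equipped with a continuous action of a compact Lie group G, let φ be a G-equivariant flow on Γ, and let S ⊆ Γ be a G-invariant isolated invariant set of φ. Then there exists an index pair (M,N) for S in which both M and N are G-invariant subsets of Γ. -/
/-!
Averaging a given isolating neighbourhood `U` over the compact group, i.e. replacing it by
`N = {x | ∀ g, g • x ∈ U}`, gives a `G`-invariant isolating neighbourhood of `S`; compactness of
`G` is what keeps `S` in the interior of `N`. By compactness of `N` there is a time `T > 0` such
that every point whose orbit stays in `N` during `[-T, T]` lies in the interior of `N`. Then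
`M = {x | φ(x, [-T, 0]) ⊆ N}` and its subset `L` of points that leave the interior of `N` during
`[0, T]` form an index pair. Both are defined through the flow and `N` alone, so they inherit
the `G`-invariance of `N` from the equivariance of the flow.
-/

open Set

lemma isOpen_setOf_forall_mem_of_isCompact {X Y Z : Type*} [TopologicalSpace X]
    [TopologicalSpace Y] [TopologicalSpace Z] {K : Set X} (hK : IsCompact K) {f : X × Y → Z}
    (hf : Continuous f) {O : Set Z} (hO : IsOpen O) :
    IsOpen {y : Y | ∀ k ∈ K, f (k, y) ∈ O} :=
  (ContinuousMap.isOpen_setOfPred_mapsTo hK hO).preimage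
    (ContinuousMap.curry ⟨fun p : Y × X => f (p.2, p.1), by fun_prop⟩).continuous

lemma exists_first_mem_of_isClosed {C : Set ℝ} (hC : IsClosed C) {w : ℝ} (hw : 0 ≤ w)
    (hwC : w ∈ C) : ∃ s₀ ∈ Icc 0 w, s₀ ∈ C ∧ ∀ s ∈ Ico 0 s₀, s ∉ C := by
  have hbdd : BddBelow (C ∩ Ici 0) := ⟨0, fun _ hs => hs.2⟩
  obtain ⟨hs₀C, hs₀⟩ := (hC.inter isClosed_Ici).csInf_mem ⟨w, hwC, hw⟩ hbdd
  exact ⟨_, ⟨hs₀, csInf_le hbdd ⟨hwC, hw⟩⟩, hs₀C,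
    fun s hs hsC => notMem_of_lt_csInf hs.2 hbdd ⟨hsC, hs.1⟩⟩

section Flow

variable {Γ : Type*} {φ : Γ × ℝ → Γ}

def flowStaysIn (φ : Γ × ℝ → Γ) (A : Set Γ) (a b : ℝ) : Set Γ :=
  {x | ∀ s ∈ Icc a b, φ (x, s) ∈ A}

lemma flowStaysIn_mono {A B : Set Γ} {a b a' b' : ℝ} (hAB : A ⊆ B) (ha : a ≤ a') (hb : b' ≤ b) :
    flowStaysIn φ A a b ⊆ flowStaysIn φ B a' b' :=
  fun _ hx s hs => hAB (hx s ⟨ha.trans hs.1, hs.2.trans hb⟩)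

lemma mem_flowStaysIn_trans {A : Set Γ} {a b c : ℝ} {x : Γ} (hab : x ∈ flowStaysIn φ A a b)
    (hbc : x ∈ flowStaysIn φ A b c) : x ∈ flowStaysIn φ A a c :=
  fun s hs => (le_total s b).elim (fun h => hab s ⟨hs.1, h⟩) (fun h => hbc s ⟨h, hs.2⟩)

lemma maxInv_mono {U V : Set Γ} (h : U ⊆ V) : maxInv φ U ⊆ maxInv φ V :=
  fun _ hx => ⟨h hx.1, fun t => h (hx.2 t)⟩

variable [TopologicalSpace Γ]

lemma flowStaysIn_subset (hφ : IsFlow φ) {A : Set Γ} {a b : ℝ} (ha : a ≤ 0) (hb : 0 ≤ b) :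
    flowStaysIn φ A a b ⊆ A :=
  fun x hx => by simpa only [hφ.2.1] using hx 0 ⟨ha, hb⟩

lemma flow_mem_flowStaysIn_iff (hφ : IsFlow φ) {A : Set Γ} {a b r : ℝ} {x : Γ} :
    φ (x, r) ∈ flowStaysIn φ A a b ↔ x ∈ flowStaysIn φ A (r + a) (r + b) := by
  constructor
  · intro h s hs
    simpa only [hφ.2.2, add_sub_cancel] using h (s - r) ⟨by linarith [hs.1], by linarith [hs.2]⟩
  · intro h s hs
    simpa only [hφ.2.2] using h (r + s) ⟨by linarith [hs.1], by linarith [hs.2]⟩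

lemma isClosed_flowStaysIn (hφ : Continuous φ) {A : Set Γ} (hA : IsClosed A) (a b : ℝ) :
    IsClosed (flowStaysIn φ A a b) := by
  simp only [flowStaysIn, ofPred_forall]
  exact isClosed_biInter fun s _ => hA.preimage (by fun_prop)

lemma isOpen_flowStaysIn (hφ : Continuous φ) {A : Set Γ} (hA : IsOpen A) (a b : ℝ) :
    IsOpen (flowStaysIn φ A a b) :=
  isOpen_setOf_forall_mem_of_isCompact isCompact_Icc (f := fun p : ℝ × Γ => φ (p.2, p.1))
    (by fun_prop) hA

lemma mem_flowStaysIn_of_forall_mem_Ico (hφ : Continuous φ) {A : Set Γ} (hA : IsClosed A)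
    {a b : ℝ} (hab : a < b) {x : Γ} (h : ∀ s ∈ Ico a b, φ (x, s) ∈ A) :
    x ∈ flowStaysIn φ A a b := by
  have hclosure := closure_minimal (show Ico a b ⊆ (fun s => φ (x, s)) ⁻¹' A from h)
    (hA.preimage (by fun_prop))
  rwa [closure_Ico hab.ne] at hclosure

lemma IsFlow.flow_mem_of_maxInv_eq (hφ : IsFlow φ) {U S : Set Γ} (hU : maxInv φ U = S)
    {x : Γ} (hx : x ∈ S) (t : ℝ) : φ (x, t) ∈ S := by
  rw [← hU] at hx ⊢
  exact ⟨hx.2 t, fun r => by rw [hφ.2.2]; exact hx.2 (t + r)⟩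

lemma isIsolatingNbhd_of_subset (hφ : IsFlow φ) {U V S : Set Γ} (hU : maxInv φ U = S)
    (hV : IsCompact V) (hVU : V ⊆ U) (hSV : S ⊆ interior V) : IsIsolatingNbhd φ V S := by
  refine ⟨hV, subset_interior_iff_mem_nhdsSet.mp hSV, subset_antisymm ?_ fun x hx => ?_⟩
  · exact hU ▸ maxInv_mono hVU
  · exact ⟨interior_subset (hSV hx),
      fun t => interior_subset (hSV (hφ.flow_mem_of_maxInv_eq hU hx t))⟩

lemma exists_flowStaysIn_subset_interior (hφ : IsFlow φ) {N : Set Γ} (hN : IsCompact N)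
    (hNc : IsClosed N) (hinv : maxInv φ N ⊆ interior N) :
    ∃ T > 0, flowStaysIn φ N (-T) T ⊆ interior N := by
  have hanti : Antitone fun n : ℕ => flowStaysIn φ N (-n) n := fun m n hmn =>
    flowStaysIn_mono subset_rfl (by simpa using hmn) (by simpa using hmn)
  have hempty : (N \ interior N) ∩ ⋂ n : ℕ, flowStaysIn φ N (-n) n = ∅ := by
    refine eq_empty_of_forall_notMem fun x ⟨⟨hxN, hx⟩, hxK⟩ => hx (hinv ⟨hxN, fun t => ?_⟩)
    obtain ⟨n, hn⟩ := exists_nat_ge |t|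
    exact mem_iInter.mp hxK n t (abs_le.mp hn)
  obtain ⟨n, hn⟩ := (hN.diff isOpen_interior).elim_directed_family_closed _
    (fun n => isClosed_flowStaysIn hφ.1 hNc _ _) hempty hanti.directed_ge
  have hpos : (0 : ℝ) < n + 1 := by positivity
  refine ⟨n + 1, hpos, fun x hx => by_contra fun hxi => ?_⟩
  have hxn : x ∈ flowStaysIn φ N (-n) n :=
    flowStaysIn_mono subset_rfl (by linarith) (by linarith) hx
  exact eq_empty_iff_forall_notMem.mp hn x
    ⟨⟨flowStaysIn_subset hφ (by linarith) hpos.le hx, hxi⟩, hxn⟩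

lemma flow_notMem_flowStaysIn_interior (hφ : IsFlow φ) {N : Set Γ} {T t r : ℝ} {x : Γ}
    (hT : 0 ≤ T) (hTN : flowStaysIn φ N (-T) T ⊆ interior N)
    (hx : x ∈ flowStaysIn φ N (-T) 0 \ flowStaysIn φ (interior N) 0 T)
    (hM : ∀ s ∈ Icc 0 t, φ (x, s) ∈ flowStaysIn φ N (-T) 0) (hr : r ∈ Icc 0 t) :
    φ (x, r) ∉ flowStaysIn φ (interior N) 0 T := by
  intro hxr
  rw [flow_mem_flowStaysIn_iff hφ, add_zero] at hxr
  have hupto : x ∈ flowStaysIn φ N 0 r := fun s hs =>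
    flowStaysIn_subset hφ (by linarith) le_rfl (hM s ⟨hs.1, hs.2.trans hr.2⟩)
  have hxN : x ∈ flowStaysIn φ N (-T) (r + T) :=
    mem_flowStaysIn_trans hx.1 (mem_flowStaysIn_trans hupto
      (flowStaysIn_mono interior_subset le_rfl le_rfl hxr))
  refine hx.2 fun s hs => (lt_or_ge s r).elim (fun hsr => ?_)
    (fun hrs => hxr s ⟨hrs, by linarith [hs.2, hr.1]⟩)
  -- before time `r`, the orbit of `φ (x, s)` stays in `N` during `[-T, T]`
  exact hTN ((flow_mem_flowStaysIn_iff hφ).mpr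
    (flowStaysIn_mono subset_rfl (by linarith [hs.1]) (by linarith) hxN))

lemma exists_flow_mem_diff_flowStaysIn (hφ : IsFlow φ) {N : Set Γ} (hNc : IsClosed N) {T t : ℝ}
    (hT : 0 < T) {x : Γ} (hx : x ∈ flowStaysIn φ N (-T) 0) (ht : 0 ≤ t)
    (hxt : φ (x, t) ∉ flowStaysIn φ N (-T) 0) :
    ∃ s ∈ Icc 0 t, φ (x, s) ∈ flowStaysIn φ N (-T) 0 \ flowStaysIn φ (interior N) 0 T := by
  obtain ⟨w, hw, hwN⟩ : ∃ w ∈ Icc 0 t, φ (x, w) ∉ interior N := by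
    rw [flow_mem_flowStaysIn_iff hφ, add_zero] at hxt
    obtain ⟨w, hw, hwN⟩ : ∃ w ∈ Icc (t + -T) t, φ (x, w) ∉ N := by
      by_contra! h
      exact hxt h
    have hw0 : 0 ≤ w := not_lt.mp fun hw0 => hwN (hx w ⟨by linarith [hw.1], hw0.le⟩)
    exact ⟨w, ⟨hw0, hw.2⟩, fun h => hwN (interior_subset h)⟩
  obtain ⟨s₀, hs₀, hs₀N, hbefore⟩ := exists_first_mem_of_isClosed
    (isOpen_interior.isClosed_compl.preimage (f := fun s => φ (x, s))
      (hφ.1.comp (.prodMk_right x)))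
    hw.1 hwN
  refine ⟨s₀, ⟨hs₀.1, hs₀.2.trans hw.2⟩, ?_,
    fun h => hs₀N (by simpa only [hφ.2.1] using h 0 ⟨le_rfl, hT.le⟩)⟩
  rw [flow_mem_flowStaysIn_iff hφ, add_zero]
  refine flowStaysIn_mono (a := -T) (b := s₀) subset_rfl (by linarith [hs₀.1]) le_rfl
    (mem_flowStaysIn_of_forall_mem_Ico hφ.1 hNc (by linarith [hs₀.1]) fun s hs => ?_)
  rcases lt_or_ge s 0 with hs0 | hs0
  · exact hx s ⟨hs.1, hs0.le⟩
  · exact interior_subset (not_not.mp (hbefore s ⟨hs0, hs.2⟩))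

lemma isIsolatingNbhd_closure_flowStaysIn (hφ : IsFlow φ) {S N : Set Γ}
    (hN : IsIsolatingNbhd φ N S) (hNc : IsClosed N) {T : ℝ} (hT : 0 ≤ T) :
    IsIsolatingNbhd φ (closure (flowStaysIn φ N (-T) 0 \
      (flowStaysIn φ N (-T) 0 \ flowStaysIn φ (interior N) 0 T))) S := by
  have hSN : S ⊆ interior N := subset_interior_iff_mem_nhdsSet.mpr hN.2.1
  have hcore : flowStaysIn φ (interior N) (-T) T ⊆
      flowStaysIn φ N (-T) 0 \ (flowStaysIn φ N (-T) 0 \ flowStaysIn φ (interior N) 0 T) :=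
    fun x hx => ⟨flowStaysIn_mono interior_subset le_rfl hT hx,
      fun h => h.2 (flowStaysIn_mono subset_rfl (by linarith) le_rfl hx)⟩
  have hMN : flowStaysIn φ N (-T) 0 ⊆ N := flowStaysIn_subset hφ (by linarith) le_rfl
  have hclosureN : closure (flowStaysIn φ N (-T) 0 \
      (flowStaysIn φ N (-T) 0 \ flowStaysIn φ (interior N) 0 T)) ⊆ N :=
    closure_minimal (sdiff_subset.trans hMN) hNc
  refine isIsolatingNbhd_of_subset hφ hN.2.2 (hN.1.of_isClosed_subset isClosed_closure hclosureN)
    hclosureN fun x hx => ?_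
  exact interior_maximal (hcore.trans subset_closure) (isOpen_flowStaysIn hφ.1 isOpen_interior _ _)
    fun s _ => hSN (hφ.flow_mem_of_maxInv_eq hN.2.2 hx s)

theorem isIndexPair_flowStaysIn (hφ : IsFlow φ) {S N : Set Γ} (hN : IsIsolatingNbhd φ N S)
    (hNc : IsClosed N) {T : ℝ} (hT : 0 < T) (hTN : flowStaysIn φ N (-T) T ⊆ interior N) :
    IsIndexPair φ S (flowStaysIn φ N (-T) 0)
      (flowStaysIn φ N (-T) 0 \ flowStaysIn φ (interior N) 0 T) := by
  have hMc : IsClosed (flowStaysIn φ N (-T) 0) := isClosed_flowStaysIn hφ.1 hNc _ _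
  have hM : IsCompact (flowStaysIn φ N (-T) 0) :=
    hN.1.of_isClosed_subset hMc (flowStaysIn_subset hφ (by linarith) le_rfl)
  refine ⟨hM, hM.of_isClosed_subset (hMc.sdiff (isOpen_flowStaysIn hφ.1 isOpen_interior _ _))
    sdiff_subset, sdiff_subset, isIsolatingNbhd_closure_flowStaysIn hφ hN hNc hT.le, ?_, ?_⟩
  · exact fun x hx t _ hxM r hr =>
      ⟨hxM r hr, flow_notMem_flowStaysIn_interior hφ hT.le hTN hx hxM hr⟩
  · exact fun x hx t ht hxt => exists_flow_mem_diff_flowStaysIn hφ hNc hT hx ht hxt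

end Flow

section Equivariant

variable {Γ G : Type*}

def invariantCore (G : Type*) [SMul G Γ] (U : Set Γ) : Set Γ :=
  {x | ∀ g : G, g • x ∈ U}

section Monoid

variable [Monoid G] [MulAction G Γ]

lemma invariantCore_subset (U : Set Γ) : invariantCore G U ⊆ U :=
  fun x hx => by simpa only [one_smul] using hx 1

lemma invariantCore_mono {U V : Set Γ} (h : U ⊆ V) : invariantCore G U ⊆ invariantCore G V :=
  fun _ hx g => h (hx g)

lemma smul_mem_invariantCore {U : Set Γ} (g : G) {x : Γ} (hx : x ∈ invariantCore G U) :
    g • x ∈ invariantCore G U :=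
  fun g' => by simpa only [smul_smul] using hx (g' * g)

lemma smul_mem_flowStaysIn {φ : Γ × ℝ → Γ}
    (hequiv : ∀ (g : G) (x : Γ) (t : ℝ), φ (g • x, t) = g • φ (x, t))
    {A : Set Γ} (hA : ∀ g : G, ∀ x ∈ A, g • x ∈ A) (a b : ℝ) :
    ∀ g : G, ∀ x ∈ flowStaysIn φ A a b, g • x ∈ flowStaysIn φ A a b :=
  fun g x hx s hs => hequiv g x s ▸ hA g _ (hx s hs)

variable [TopologicalSpace Γ]

lemma isClosed_invariantCore [ContinuousConstSMul G Γ] {U : Set Γ} (hU : IsClosed U) :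
    IsClosed (invariantCore G U) := by
  simp only [invariantCore, ofPred_forall]
  exact isClosed_iInter fun g => hU.preimage (continuous_const_smul g)

lemma isOpen_invariantCore [TopologicalSpace G] [CompactSpace G] [ContinuousSMul G Γ]
    {U : Set Γ} (hU : IsOpen U) : IsOpen (invariantCore G U) := by
  simpa [invariantCore] using
    isOpen_setOf_forall_mem_of_isCompact isCompact_univ (continuous_smul (M := G) (X := Γ)) hU

lemma subset_interior_invariantCore [TopologicalSpace G] [CompactSpace G] [ContinuousSMul G Γ]
    {S U : Set Γ} (hS : ∀ g : G, ∀ x ∈ S, g • x ∈ S) (hSU : S ⊆ interior U) :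
    S ⊆ interior (invariantCore G U) := fun x hx =>
  interior_maximal (invariantCore_mono interior_subset) (isOpen_invariantCore isOpen_interior)
    fun g => hSU (hS g x hx)

lemma IsIsolatingNbhd.invariantCore [T2Space Γ] [TopologicalSpace G] [CompactSpace G]
    [ContinuousSMul G Γ] {φ : Γ × ℝ → Γ} (hφ : IsFlow φ) {S U : Set Γ}
    (hU : IsIsolatingNbhd φ U S) (hS : ∀ g : G, ∀ x ∈ S, g • x ∈ S) :
    IsIsolatingNbhd φ (invariantCore G U) S :=
  isIsolatingNbhd_of_subset hφ hU.2.2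
    (hU.1.of_isClosed_subset (isClosed_invariantCore hU.1.isClosed) (invariantCore_subset U))
    (invariantCore_subset U)
    (subset_interior_invariantCore hS (subset_interior_iff_mem_nhdsSet.mpr hU.2.1))

end Monoid

variable [Group G] [MulAction G Γ]

lemma smul_mem_diff {A B : Set Γ} (hA : ∀ g : G, ∀ x ∈ A, g • x ∈ A)
    (hB : ∀ g : G, ∀ x ∈ B, g • x ∈ B) : ∀ g : G, ∀ x ∈ A \ B, g • x ∈ A \ B :=
  fun g x hx => ⟨hA g x hx.1, fun h => hx.2 (by simpa only [inv_smul_smul] using hB g⁻¹ _ h)⟩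

lemma smul_mem_interior [TopologicalSpace Γ] [ContinuousConstSMul G Γ] {A : Set Γ}
    (hA : ∀ g : G, ∀ x ∈ A, g • x ∈ A) :
    ∀ g : G, ∀ x ∈ interior A, g • x ∈ interior A := fun g x hx =>
  interior_mono (smul_set_subset_iff.mpr fun y hy => hA g y hy)
    (by rw [interior_smul]; exact smul_mem_smul_set hx)

end Equivariant

theorem exists_equivariant_index_pair_general
    {Γ : Type*} [TopologicalSpace Γ] [T2Space Γ]
    {G : Type*} [TopologicalSpace G] [Group G]
    [CompactSpace G] [MulAction G Γ] [ContinuousSMul G Γ]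
    (φ : Γ × ℝ → Γ) (hφ : IsFlow φ)
    (hequiv : ∀ (g : G) (x : Γ) (t : ℝ), φ (g • x, t) = g • φ (x, t))
    (S : Set Γ) (hS : IsIsolatedInvariantSet φ S)
    (hSinv : ∀ (g : G), ∀ x ∈ S, g • x ∈ S) :
    ∃ M N : Set Γ, IsIndexPair φ S M N ∧
      (∀ (g : G), ∀ x ∈ M, g • x ∈ M) ∧ (∀ (g : G), ∀ x ∈ N, g • x ∈ N) := by
  obtain ⟨-, U, hU⟩ := hS
  have hN : IsIsolatingNbhd φ (invariantCore G U) S := hU.invariantCore hφ hSinv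
  have hNc : IsClosed (invariantCore G U) := hN.1.isClosed
  have hNG : ∀ g : G, ∀ x ∈ invariantCore G U, g • x ∈ invariantCore G U :=
    fun g _ hx => smul_mem_invariantCore g hx
  obtain ⟨T, hT, hTN⟩ := exists_flowStaysIn_subset_interior hφ hN.1 hNc
    (hN.2.2.trans_subset (subset_interior_iff_mem_nhdsSet.mpr hN.2.1))
  have hMG := smul_mem_flowStaysIn hequiv hNG (-T) 0
  exact ⟨_, _, isIndexPair_flowStaysIn hφ hN hNc hT hTN, hMG,
    smul_mem_diff hMG (smul_mem_flowStaysIn hequiv (smul_mem_interior hNG) 0 T)⟩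

/-- **Equivariant existence of index pairs** (Floer): if a compact Lie group `G` acts
continuously on a locally compact Hausdorff space `Γ` and the flow `φ` is `G`-equivariant,
then every `G`-invariant isolated invariant set admits a `G`-invariant index pair. -/
theorem exists_equivariant_index_pair
    {Γ : Type*} [TopologicalSpace Γ] [LocallyCompactSpace Γ] [T2Space Γ]
    {E : Type*} [NormedAddCommGroup E] [NormedSpace ℝ E]
    {H : Type*} [TopologicalSpace H] (I : ModelWithCorners ℝ E H)
    {G : Type*} [TopologicalSpace G] [ChartedSpace H G] [Group G] [LieGroup I (⊤ : ℕ∞) G]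
    [CompactSpace G] [MulAction G Γ] [ContinuousSMul G Γ]
    (φ : Γ × ℝ → Γ) (hφ : IsFlow φ)
    (hequiv : ∀ (g : G) (x : Γ) (t : ℝ), φ (g • x, t) = g • φ (x, t))
    (S : Set Γ) (hS : IsIsolatedInvariantSet φ S)
    (hSinv : ∀ (g : G), ∀ x ∈ S, g • x ∈ S) :
    ∃ M N : Set Γ, IsIndexPair φ S M N ∧
      (∀ (g : G), ∀ x ∈ M, g • x ∈ M) ∧ (∀ (g : G), ∀ x ∈ N, g • x ∈ N) :=
  exists_equivariant_index_pair_general φ hφ hequiv S hS hSinv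
end

section
/- Let Γ be a locally compact Hausdorff topological space, let φ be a flow on Γ, let S ⊆ Γ be an isolated invariant set of φ, and let (A,R) be an attractor-repeller pair in S. Then A and R are each compact, invariant under the flow, and each is itself an isolated invariant set of φ. -/
open Set

/-- The ω-limit `ω(T)`: the maximal invariant set of the closure of the forward orbit of `T`. -/
def omegaSet {Γ : Type*} [TopologicalSpace Γ] (φ : Γ × ℝ → Γ) (T : Set Γ) : Set Γ :=
  maxInv φ (closure (φ '' (T ×ˢ Ici (0 : ℝ))))

/-- The ω*-limit `ω*(T)`: the maximal invariant set of the closure of the backward orbit of `T`. -/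
def omegaStarSet {Γ : Type*} [TopologicalSpace Γ] (φ : Γ × ℝ → Γ) (T : Set Γ) : Set Γ :=
  maxInv φ (closure (φ '' (T ×ˢ Iic (0 : ℝ))))

/-- `A` is an attractor in the isolated invariant set `S`: there is a neighbourhood `U` of `A`
in the subspace `S` with `A = ω(U)`. -/
def IsAttractorIn {Γ : Type*} [TopologicalSpace Γ] (φ : Γ × ℝ → Γ) (S A : Set Γ) : Prop :=
  A ⊆ S ∧ ∃ U : Set Γ, U ⊆ S ∧ (∃ V : Set Γ, IsOpen V ∧ A ⊆ V ∧ V ∩ S ⊆ U) ∧ omegaSet φ U = A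

/-- `R` is a repeller in the isolated invariant set `S`: there is a neighbourhood `U` of `R`
in the subspace `S` with `R = ω*(U)`. -/
def IsRepellerIn {Γ : Type*} [TopologicalSpace Γ] (φ : Γ × ℝ → Γ) (S R : Set Γ) : Prop :=
  R ⊆ S ∧ ∃ U : Set Γ, U ⊆ S ∧ (∃ V : Set Γ, IsOpen V ∧ R ⊆ V ∧ V ∩ S ⊆ U) ∧ omegaStarSet φ U = R

/-- The complementary repeller `A* = {x ∈ S | ω({x}) ∩ A = ∅}` of an attractor `A ⊆ S`. -/
def compRepeller {Γ : Type*} [TopologicalSpace Γ] (φ : Γ × ℝ → Γ) (S A : Set Γ) : Set Γ :=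
  {x ∈ S | omegaSet φ {x} ∩ A = ∅}

/-- The complementary attractor `R* = {x ∈ S | ω*({x}) ∩ R = ∅}` of a repeller `R ⊆ S`. -/
def compAttractor {Γ : Type*} [TopologicalSpace Γ] (φ : Γ × ℝ → Γ) (S R : Set Γ) : Set Γ :=
  {x ∈ S | omegaStarSet φ {x} ∩ R = ∅}

/-- `(A, R)` is an attractor-repeller pair in `S`. -/
def IsAttractorRepellerPair {Γ : Type*} [TopologicalSpace Γ] (φ : Γ × ℝ → Γ)
    (S A R : Set Γ) : Prop :=
  IsAttractorIn φ S A ∧ IsRepellerIn φ S R ∧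
    A = compAttractor φ S R ∧ R = compRepeller φ S A

lemma maxInv_invariant {Γ : Type*} [TopologicalSpace Γ] {φ : Γ × ℝ → Γ} (hφ : IsFlow φ)
    (U : Set Γ) {x : Γ} (hx : x ∈ maxInv φ U) (t : ℝ) : φ (x, t) ∈ maxInv φ U := by
  refine ⟨hx.2 t, fun s => ?_⟩
  rw [hφ.2.2]
  exact hx.2 (t + s)

lemma maxInv_isClosed {Γ : Type*} [TopologicalSpace Γ] {φ : Γ × ℝ → Γ} (hφ : IsFlow φ)
    {C : Set Γ} (hC : IsClosed C) : IsClosed (maxInv φ C) := by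
  have h : maxInv φ C = ⋂ t : ℝ, (fun u => φ (u, t)) ⁻¹' C := by
    ext u
    simp only [maxInv, mem_setOf_eq, mem_iInter, mem_preimage]
    refine ⟨fun h t => h.2 t, fun h => ⟨?_, h⟩⟩
    have := h 0
    rwa [hφ.2.1] at this
  rw [h]
  exact isClosed_iInter fun t =>
    hC.preimage (hφ.1.comp (continuous_id.prodMk continuous_const))

lemma isolated_aux {Γ : Type*} [TopologicalSpace Γ] [LocallyCompactSpace Γ]
    {φ : Γ × ℝ → Γ} (hφ : IsFlow φ) {U S T C UT V : Set Γ}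
    (hU : IsIsolatingNbhd φ U S) (hTdef : T = maxInv φ C)
    (hTc : IsCompact T) (hTS : T ⊆ S)
    (hUTC : UT ⊆ C) (hV : IsOpen V) (hTV : T ⊆ V) (hVS : V ∩ S ⊆ UT) :
    IsIsolatedInvariantSet φ T := by
  refine ⟨hTc, ?_⟩
  have hSU : S ⊆ interior U := subset_interior_iff_mem_nhdsSet.2 hU.2.1
  obtain ⟨W, hWc, hTW, hWsub⟩ :=
    exists_compact_between hTc (hV.inter isOpen_interior)
      (subset_inter hTV (hTS.trans hSU))
  refine ⟨W, hWc, subset_interior_iff_mem_nhdsSet.1 hTW, ?_⟩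
  apply Subset.antisymm
  · intro x hx
    have horb : ∀ t : ℝ, φ (x, t) ∈ C := by
      intro t
      have hxt : φ (x, t) ∈ maxInv φ U := by
        refine ⟨interior_subset (hWsub (hx.2 t)).2, fun s => ?_⟩
        rw [hφ.2.2]
        exact interior_subset (hWsub (hx.2 (t + s))).2
      rw [hU.2.2] at hxt
      exact hUTC (hVS ⟨(hWsub (hx.2 t)).1, hxt⟩)
    rw [hTdef]
    refine ⟨?_, horb⟩
    have := horb 0
    rwa [hφ.2.1] at this
  · intro x hx
    have hx' : x ∈ maxInv φ C := hTdef ▸ hx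
    refine ⟨(hTW.trans interior_subset) hx, fun t => ?_⟩
    have : φ (x, t) ∈ T := hTdef ▸ maxInv_invariant hφ C hx' t
    exact (hTW.trans interior_subset) this

/-- In an attractor-repeller pair `(A, R)` of an isolated invariant set `S`, both `A` and `R`
are compact, invariant under the flow, and are themselves isolated invariant sets. -/
theorem attractorRepellerPair_compact_invariant_isolated
    {Γ : Type*} [TopologicalSpace Γ] [LocallyCompactSpace Γ] [T2Space Γ]
    (φ : Γ × ℝ → Γ) (hφ : IsFlow φ) (S : Set Γ) (hS : IsIsolatedInvariantSet φ S)
    (A R : Set Γ) (hAR : IsAttractorRepellerPair φ S A R) :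
    IsCompact A ∧ IsCompact R ∧
    (∀ x ∈ A, ∀ t : ℝ, φ (x, t) ∈ A) ∧ (∀ x ∈ R, ∀ t : ℝ, φ (x, t) ∈ R) ∧
    IsIsolatedInvariantSet φ A ∧ IsIsolatedInvariantSet φ R := by
  obtain ⟨hSc, U, hU⟩ := hS
  obtain ⟨⟨hAS, UA, hUAS, ⟨VA, hVAo, hAVA, hVAS⟩, hωA⟩,
    ⟨hRS, UR, hURS, ⟨VR, hVRo, hRVR, hVRS⟩, hωR⟩, _, _⟩ := hAR
  -- A and R as maximal invariant sets of closed sets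
  have hAdef : A = maxInv φ (closure (φ '' (UA ×ˢ Ici (0 : ℝ)))) := hωA.symm
  have hRdef : R = maxInv φ (closure (φ '' (UR ×ˢ Iic (0 : ℝ)))) := hωR.symm
  have hAclosed : IsClosed A := hAdef ▸ maxInv_isClosed hφ isClosed_closure
  have hRclosed : IsClosed R := hRdef ▸ maxInv_isClosed hφ isClosed_closure
  have hAc : IsCompact A := hSc.of_isClosed_subset hAclosed hAS
  have hRc : IsCompact R := hSc.of_isClosed_subset hRclosed hRS
  have hAinv : ∀ x ∈ A, ∀ t : ℝ, φ (x, t) ∈ A := by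
    intro x hx t
    have := maxInv_invariant hφ _ (hAdef ▸ hx) t
    rwa [← hAdef] at this
  have hRinv : ∀ x ∈ R, ∀ t : ℝ, φ (x, t) ∈ R := by
    intro x hx t
    have := maxInv_invariant hφ _ (hRdef ▸ hx) t
    rwa [← hRdef] at this
  have hUAC : UA ⊆ closure (φ '' (UA ×ˢ Ici (0 : ℝ))) := by
    intro y hy
    apply subset_closure
    exact ⟨(y, 0), ⟨hy, mem_Ici.2 (le_refl 0)⟩, hφ.2.1 y⟩
  have hURC : UR ⊆ closure (φ '' (UR ×ˢ Iic (0 : ℝ))) := by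
    intro y hy
    apply subset_closure
    exact ⟨(y, 0), ⟨hy, mem_Iic.2 (le_refl 0)⟩, hφ.2.1 y⟩
  refine ⟨hAc, hRc, hAinv, hRinv, ?_, ?_⟩
  · exact isolated_aux hφ hU hAdef hAc hAS (hUAC.trans Subset.rfl) hVAo hAVA hVAS
  · exact isolated_aux hφ hU hRdef hRc hRS (hURC.trans Subset.rfl) hVRo hRVR hVRS
end
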